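/- arXiv:2209.13220 — 4 statements merged into one kernel-verified Lean document; each statement's English description precedes it below -/
import Mathlib

section
/- For any LTL formula φ and any infinite word σ = σ_i σ_{i+1} ..., the word satisfies φ from position i if and only if it satisfies the progressed formula prog(σ_i, φ) from position i+1. -/
inductive LTL (P : Type) : Type
  | tt : LTL P
  | atom : P → LTL P
  | neg : LTL P → LTL P
  | conj : LTL P → LTL P → LTL P
  | disj : LTL P → LTL P → LTL P
  | next : LTL P → LTL P
  | until_ : LTL P → LTL P → LTL P
  deriving DecidableEq

namespace LTL
variable {P : Type}

/-- The Boolean constant False, encoded as ¬⊤. -/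
def ff : LTL P := neg tt

/-- Standard LTL semantics: `sat σ i φ` means ⟨σ, i⟩ ⊨ φ. -/
def sat (σ : ℕ → Set P) : ℕ → LTL P → Prop
  | _, tt => True
  | i, atom p => p ∈ σ i
  | i, neg φ => ¬ sat σ i φ
  | i, conj φ ψ => sat σ i φ ∧ sat σ i ψ
  | i, disj φ ψ => sat σ i φ ∨ sat σ i ψ
  | i, next φ => sat σ (i+1) φ
  | i, until_ φ ψ => ∃ j, i ≤ j ∧ sat σ j ψ ∧ ∀ k, i ≤ k → k < j → sat σ k φ

open Classical in
/-- The LTL progression operator `prog a φ` (a = current letter in 2^Π). -/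
noncomputable def prog (a : Set P) : LTL P → LTL P
  | tt => tt
  | atom p => if p ∈ a then tt else ff
  | neg φ => neg (prog a φ)
  | conj φ ψ => conj (prog a φ) (prog a ψ)
  | disj φ ψ => disj (prog a φ) (prog a ψ)
  | next φ => φ
  | until_ φ ψ => disj (prog a ψ) (conj (prog a φ) (until_ φ ψ))

end LTL

/-- ⟨σ, i⟩ ⊨ φ iff ⟨σ, i+1⟩ ⊨ prog(σ_i, φ). -/
theorem ltl_progression {P : Type} (φ : LTL P) (σ : ℕ → Set P) (i : ℕ) :
    LTL.sat σ i φ ↔ LTL.sat σ (i + 1) (LTL.prog (σ i) φ) := by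
  induction φ generalizing i with
  | tt => simp [LTL.sat, LTL.prog]
  | atom p =>
    by_cases h : p ∈ σ i <;> simp [LTL.sat, LTL.prog, LTL.ff, h]
  | neg φ ih => simpa [LTL.sat, LTL.prog] using not_congr (ih i)
  | conj φ ψ ih1 ih2 => simp [LTL.sat, LTL.prog, ih1 i, ih2 i]
  | disj φ ψ ih1 ih2 => simp [LTL.sat, LTL.prog, ih1 i, ih2 i]
  | next φ ih => simp [LTL.sat, LTL.prog]
  | until_ φ ψ ih1 ih2 =>
    have unfold : LTL.sat σ i (LTL.until_ φ ψ) ↔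
        LTL.sat σ i ψ ∨ (LTL.sat σ i φ ∧ LTL.sat σ (i+1) (LTL.until_ φ ψ)) := by
      constructor
      · rintro ⟨j, hij, hψ, hφ⟩
        rcases eq_or_lt_of_le hij with rfl | hlt
        · exact Or.inl hψ
        · refine Or.inr ⟨hφ i le_rfl hlt, j, hlt, hψ, fun k hk hkj => hφ k (le_trans i.le_succ hk) hkj⟩
      · rintro (hψ | ⟨hφ, j, hij, hψ, hφ'⟩)
        · exact ⟨i, le_rfl, hψ, fun k hk hkj => absurd (lt_of_le_of_lt hk hkj) (lt_irrefl i)⟩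
        · refine ⟨j, le_trans i.le_succ hij, hψ, fun k hk hkj => ?_⟩
          rcases eq_or_lt_of_le hk with rfl | hlt
          · exact hφ
          · exact hφ' k hlt hkj
    rw [unfold, ih1 i, ih2 i]
    simp [LTL.prog, LTL.sat]
end

section
/- Iterating the progression operator preserves LTL semantics: for any LTL formula φ, word σ, and n ≥ 0, ⟨σ, 0⟩ ⊨ φ if and only if ⟨σ, n⟩ ⊨ prog(σ_{n-1}, prog(σ_{n-2}, ... prog(σ_0, φ)...)). -/
/-- Iterated progression: prog^0(σ,φ) = φ, prog^{n+1}(σ,φ) = prog(σ_n, prog^n(σ,φ)). -/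
noncomputable def LTL.progN {P : Type} (σ : ℕ → Set P) (φ : LTL P) : ℕ → LTL P
  | 0 => φ
  | n + 1 => LTL.prog (σ n) (LTL.progN σ φ n)

lemma LTL.sat_until_iff {P : Type} (σ : ℕ → Set P) (i : ℕ) (φ ψ : LTL P) :
    LTL.sat σ i (LTL.until_ φ ψ) ↔
      LTL.sat σ i ψ ∨ (LTL.sat σ i φ ∧ LTL.sat σ (i+1) (LTL.until_ φ ψ)) := by
  constructor
  · rintro ⟨j, hij, hψ, hφ⟩
    rcases eq_or_lt_of_le hij with rfl | hlt
    · exact Or.inl hψ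
    · refine Or.inr ⟨hφ i le_rfl hlt, j, hlt, hψ, fun k hk hkj => hφ k (le_of_lt (Nat.lt_of_succ_le hk)) hkj⟩
  · rintro (hψ | ⟨hφ, j, hij, hψ, hφ'⟩)
    · exact ⟨i, le_rfl, hψ, fun k hk hkj => absurd (lt_of_le_of_lt hk hkj) (lt_irrefl _)⟩
    · refine ⟨j, le_of_lt (Nat.lt_of_succ_le hij), hψ, fun k hk hkj => ?_⟩
      rcases eq_or_lt_of_le hk with rfl | hlt
      · exact hφ
      · exact hφ' k hlt hkj

lemma LTL.sat_prog {P : Type} (σ : ℕ → Set P) (φ : LTL P) :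
    ∀ i, LTL.sat σ (i+1) (LTL.prog (σ i) φ) ↔ LTL.sat σ i φ := by
  induction φ with
  | tt => intro i; simp [prog, sat]
  | atom p =>
    intro i
    by_cases h : p ∈ σ i <;> simp [prog, h, sat, ff]
  | neg φ ih => intro i; simp [prog, sat, ih]
  | conj φ ψ ihφ ihψ => intro i; simp [prog, sat, ihφ, ihψ]
  | disj φ ψ ihφ ihψ => intro i; simp [prog, sat, ihφ, ihψ]
  | next φ => intro i; simp [prog, sat]
  | until_ φ ψ ihφ ihψ =>
    intro i
    rw [LTL.sat_until_iff σ i]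
    show LTL.sat σ (i+1) (LTL.disj _ (LTL.conj _ _)) ↔ _
    simp only [sat, ihφ, ihψ]

/-- ⟨σ, 0⟩ ⊨ φ iff ⟨σ, n⟩ ⊨ prog^n(σ, φ). -/
theorem ltl_progression_iterated {P : Type} (φ : LTL P) (σ : ℕ → Set P) (n : ℕ) :
    LTL.sat σ 0 φ ↔ LTL.sat σ n (LTL.progN σ φ n) := by
  induction n with
  | zero => rfl
  | succ n ih => rw [ih, LTL.progN, LTL.sat_prog]
end

section
/- Every subformula of prog(σ, φ) that contains a temporal operator (○ or ∪) is a subformula of φ; consequently, the set of temporal subformulas of iterated progressions of φ is contained in the set of temporal subformulas of φ, and in particular closing φ under progression by all letters yields only finitely many distinct temporal subformulas. -/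
/-- The set of subformulas of a formula. -/
def LTL.subf {P : Type} : LTL P → Set (LTL P)
  | .tt => {.tt}
  | .atom p => {.atom p}
  | .neg φ => insert (.neg φ) φ.subf
  | .conj φ ψ => insert (.conj φ ψ) (φ.subf ∪ ψ.subf)
  | .disj φ ψ => insert (.disj φ ψ) (φ.subf ∪ ψ.subf)
  | .next φ => insert (.next φ) φ.subf
  | .until_ φ ψ => insert (.until_ φ ψ) (φ.subf ∪ ψ.subf)

/-- A formula is temporal iff its outermost operator is ○ or ∪. -/
def LTL.IsTemporal {P : Type} : LTL P → Prop
  | .next _ => True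
  | .until_ _ _ => True
  | _ => False

lemma LTL.subf_finite {P : Type} (φ : LTL P) : φ.subf.Finite := by
  induction φ with
  | tt => exact Set.finite_singleton _
  | atom p => exact Set.finite_singleton _
  | neg φ ih => exact (ih.insert _)
  | conj φ ψ ih1 ih2 => exact ((ih1.union ih2).insert _)
  | disj φ ψ ih1 ih2 => exact ((ih1.union ih2).insert _)
  | next φ ih => exact (ih.insert _)
  | until_ φ ψ ih1 ih2 => exact ((ih1.union ih2).insert _)

lemma LTL.temporal_subf_prog {P : Type} (φ : LTL P) (a : Set P) (ψ : LTL P)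
    (h : ψ ∈ (LTL.prog a φ).subf) (ht : ψ.IsTemporal) : ψ ∈ φ.subf := by
  induction φ with
  | tt =>
    simp only [LTL.prog, LTL.subf, Set.mem_singleton_iff] at h
    subst h; exact ht.elim
  | atom p =>
    simp only [LTL.prog] at h
    split at h <;> simp only [LTL.ff, LTL.subf, Set.mem_insert_iff,
      Set.mem_singleton_iff] at h
    · subst h; exact ht.elim
    · rcases h with h | h <;> (subst h; exact ht.elim)
  | neg φ ih =>
    simp only [LTL.prog, LTL.subf, Set.mem_insert_iff] at h
    rcases h with h | h
    · subst h; exact ht.elim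
    · exact Set.mem_insert_of_mem _ (ih h)
  | conj φ χ ih1 ih2 =>
    simp only [LTL.prog, LTL.subf, Set.mem_insert_iff, Set.mem_union] at h ⊢
    rcases h with h | h | h
    · subst h; exact ht.elim
    · exact Or.inr (Or.inl (ih1 h))
    · exact Or.inr (Or.inr (ih2 h))
  | disj φ χ ih1 ih2 =>
    simp only [LTL.prog, LTL.subf, Set.mem_insert_iff, Set.mem_union] at h ⊢
    rcases h with h | h | h
    · subst h; exact ht.elim
    · exact Or.inr (Or.inl (ih1 h))
    · exact Or.inr (Or.inr (ih2 h))
  | next φ ih =>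
    exact Set.mem_insert_of_mem _ h
  | until_ φ χ ih1 ih2 =>
    simp only [LTL.prog, LTL.subf, Set.mem_insert_iff, Set.mem_union] at h ⊢
    rcases h with h | h | (h | h | h)
    · subst h; exact ht.elim
    · exact Or.inr (Or.inr (ih2 h))
    · subst h; exact ht.elim
    · exact Or.inr (Or.inl (ih1 h))
    · exact h

/-- every temporal subformula of prog(σ, φ) is a subformula of φ;
hence temporal subformulas of iterated progressions of φ are temporal subformulas of φ,
and the set of temporal subformulas arising from all progressions of φ is finite. -/
theorem temporal_subformulas_of_prog {P : Type} (φ : LTL P) :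
    (∀ (a : Set P) (ψ : LTL P), ψ ∈ (LTL.prog a φ).subf → ψ.IsTemporal → ψ ∈ φ.subf) ∧
    (∀ (σ : ℕ → Set P) (n : ℕ) (ψ : LTL P),
      ψ ∈ (LTL.progN σ φ n).subf → ψ.IsTemporal → ψ ∈ φ.subf) ∧
    {ψ : LTL P | ψ.IsTemporal ∧ ∃ (σ : ℕ → Set P) (n : ℕ),
      ψ ∈ (LTL.progN σ φ n).subf}.Finite := by
  constructor
  · exact fun a ψ h ht => LTL.temporal_subf_prog φ a ψ h ht
  constructor
  · intro σ n
    induction n with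
    | zero => intro ψ h _; exact h
    | succ n ih =>
      intro ψ h ht
      exact ih ψ (LTL.temporal_subf_prog _ (σ n) ψ h ht) ht
  · apply Set.Finite.subset (LTL.subf_finite φ)
    rintro ψ ⟨ht, σ, n, h⟩
    induction n with
    | zero => exact h
    | succ n ih => exact ih (LTL.temporal_subf_prog _ (σ n) ψ h ht)
end

section
/- A finite word σ₀...σ_n is a 'good prefix' for an sc-LTL formula φ (i.e., every infinite extension satisfies φ) if the iterated progression of φ along σ₀...σ_n is semantically equivalent to True. -/
/-- Eventually: ◊φ := ⊤ ∪ φ. -/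
def LTL.ev {P : Type} (φ : LTL P) : LTL P := LTL.until_ LTL.tt φ

/-- Syntactically co-safe LTL: negation only in front of atomic propositions. -/
inductive LTL.CoSafe {P : Type} : LTL P → Prop
  | tt : LTL.CoSafe LTL.tt
  | atom (p : P) : LTL.CoSafe (LTL.atom p)
  | natom (p : P) : LTL.CoSafe (LTL.neg (LTL.atom p))
  | conj {φ ψ : LTL P} : LTL.CoSafe φ → LTL.CoSafe ψ → LTL.CoSafe (LTL.conj φ ψ)
  | disj {φ ψ : LTL P} : LTL.CoSafe φ → LTL.CoSafe ψ → LTL.CoSafe (LTL.disj φ ψ)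
  | next {φ : LTL P} : LTL.CoSafe φ → LTL.CoSafe (LTL.next φ)
  | until_ {φ ψ : LTL P} : LTL.CoSafe φ → LTL.CoSafe ψ → LTL.CoSafe (LTL.until_ φ ψ)

/-- Iterated progression along a finite word (list of letters). -/
noncomputable def LTL.progList {P : Type} (φ : LTL P) : List (Set P) → LTL P
  | [] => φ
  | a :: w => LTL.progList (LTL.prog a φ) w


/-!
Progression is sound: `⟨σ, i + 1⟩ ⊨ prog(σᵢ, φ)` iff `⟨σ, i⟩ ⊨ φ`. Iterating along a word `σ`
that starts with `w`, the progression of `φ` along `w` holds at position `|w|` iff `φ` holds at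
position `0`. If that progression holds on every word, it holds in particular on the suffix of `σ`
starting at `|w|`, which is the same as holding on `σ` at position `|w|`.
-/

namespace LTL

variable {P : Type}

theorem sat_shift (σ : ℕ → Set P) (k : ℕ) (φ : LTL P) (i : ℕ) :
    sat (fun j => σ (k + j)) i φ ↔ sat σ (k + i) φ := by
  induction φ generalizing i with
  | tt => simp only [sat]
  | atom p => simp only [sat]
  | neg φ ih => simp only [sat, ih]
  | conj φ ψ ihφ ihψ => simp only [sat, ihφ, ihψ]
  | disj φ ψ ihφ ihψ => simp only [sat, ihφ, ihψ]
  | next φ ih => simp only [sat, ih, Nat.add_assoc]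
  | until_ φ ψ ihφ ihψ =>
    simp only [sat, ihφ, ihψ]
    constructor
    · rintro ⟨j, hij, hψ, hφ⟩
      refine ⟨k + j, by omega, hψ, fun m hm hmj => ?_⟩
      simpa [Nat.add_sub_cancel' (by omega : k ≤ m)] using hφ (m - k) (by omega) (by omega)
    · rintro ⟨j, hij, hψ, hφ⟩
      refine ⟨j - k, by omega, by rwa [Nat.add_sub_cancel' (by omega : k ≤ j)], fun m hm hmj => ?_⟩
      exact hφ (k + m) (by omega) (by omega)

theorem sat_until_iff_s13 (σ : ℕ → Set P) (φ ψ : LTL P) (i : ℕ) :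
    sat σ i (until_ φ ψ) ↔ sat σ i ψ ∨ (sat σ i φ ∧ sat σ (i + 1) (until_ φ ψ)) := by
  simp only [sat]
  constructor
  · rintro ⟨j, hij, hψ, hφ⟩
    rcases hij.eq_or_lt with rfl | hij
    · exact .inl hψ
    · exact .inr ⟨hφ i le_rfl hij, j, hij, hψ, fun m hm => hφ m (by omega)⟩
  · rintro (hψ | ⟨hφi, j, hij, hψ, hφ⟩)
    · exact ⟨i, le_rfl, hψ, fun m hm hmi => absurd hmi (by omega)⟩
    · refine ⟨j, by omega, hψ, fun m hm hmj => ?_⟩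
      rcases hm.eq_or_lt with rfl | hm
      · exact hφi
      · exact hφ m hm hmj

theorem sat_prog_s13 (σ : ℕ → Set P) (φ : LTL P) (i : ℕ) :
    sat σ (i + 1) (prog (σ i) φ) ↔ sat σ i φ := by
  induction φ with
  | tt => simp only [prog, sat]
  | atom p => by_cases hp : p ∈ σ i <;> simp [prog, ff, sat, hp]
  | neg φ ih => simp only [prog, sat, ih]
  | conj φ ψ ihφ ihψ => simp only [prog, sat, ihφ, ihψ]
  | disj φ ψ ihφ ihψ => simp only [prog, sat, ihφ, ihψ]
  | next φ => simp only [prog, sat]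
  | until_ φ ψ ihφ ihψ =>
    rw [sat_until_iff_s13]
    simp only [prog, sat, ihφ, ihψ]

theorem sat_progList (σ : ℕ → Set P) (w : List (Set P)) (φ : LTL P) (i : ℕ)
    (hσ : ∀ m (hm : m < w.length), σ (i + m) = w[m]) :
    sat σ (i + w.length) (progList φ w) ↔ sat σ i φ := by
  induction w generalizing φ i with
  | nil => simp only [progList, List.length_nil, Nat.add_zero]
  | cons a w ih =>
    have ha : σ i = a := hσ 0 (by simp)
    have htail : ∀ m (hm : m < w.length), σ (i + 1 + m) = w[m] := fun m hm => by
      rw [Nat.add_assoc, Nat.add_comm 1 m]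
      exact hσ (m + 1) (Nat.succ_lt_succ hm)
    rw [progList, List.length_cons, ← Nat.add_assoc, Nat.add_right_comm, ih _ _ htail, ← ha,
      sat_prog_s13]

end LTL

theorem good_prefix_of_progression_true_general {P : Type} (φ : LTL P)
    (w : List (Set P))
    (h : ∀ τ : ℕ → Set P, LTL.sat τ 0 (LTL.progList φ w)) :
    ∀ σ : ℕ → Set P, (∀ i : ℕ, (hi : i < w.length) → σ i = w[i]) →
      LTL.sat σ 0 φ := by
  intro σ hσ
  have hsuffix : LTL.sat σ w.length (LTL.progList φ w) :=
    (LTL.sat_shift σ w.length _ 0).1 (h _)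
  exact (LTL.sat_progList σ w φ 0 (by simpa using hσ)).1 (by simpa using hsuffix)

/-- a finite word σ₀...σ_n is a good prefix for an sc-LTL formula φ
(every infinite extension satisfies φ at position 0) if the iterated progression of φ
along σ₀...σ_n is semantically equivalent to True. -/
theorem good_prefix_of_progression_true {P : Type} (φ : LTL P) (hφ : LTL.CoSafe φ)
    (w : List (Set P)) (hw : w ≠ [])
    (h : ∀ τ : ℕ → Set P, LTL.sat τ 0 (LTL.progList φ w)) :
    ∀ σ : ℕ → Set P, (∀ i : ℕ, (hi : i < w.length) → σ i = w[i]) →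
      LTL.sat σ 0 φ :=
  good_prefix_of_progression_true_general φ w h
end
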